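/- arXiv:2309.10143 — 3 statements merged into one kernel-verified Lean document; each statement's English description precedes it below -/
import Mathlib

section
/- Let X be a set, Ω a domain on X, K_Ω : Ω → ℝ, K a completion of K_Ω, and (H, φ) a realization of K. Then K is an extreme point of the convex set 𝒞(K_Ω) (i.e., whenever K = α K₁ + (1−α) K₂ with K₁, K₂ ∈ 𝒞(K_Ω) and 0 < α < 1, one has K₁ = K₂ = K) if and only if every self-adjoint continuous linear operator Ψ : H → H satisfying ⟪φ x, Ψ(φ y)⟫ = 0 for all (x,y) ∈ Ω is the zero operator. -/
/-!
If `Ψ` is self-adjoint with `⟪φ x, Ψ (φ y)⟫ = 0` on `Ω`, then for `ε = (1 + ‖Ψ‖)⁻¹` the operators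
`1 ± εΨ` are positive, so `K ± ε⟪φ ·, Ψ (φ ·)⟫` are completions of `KΩ` with average `K`;
extremality forces `⟪φ x, Ψ (φ y)⟫ = 0` everywhere, i.e. `Ψ = 0`.

Conversely, if `K = αK₁ + (1 - α)K₂`, then as quadratic forms on finitely supported coefficient
vectors `-K ≤ K₁ - K ≤ α⁻¹K`. By polarization `K₁ - K` is a bounded symmetric bilinear form on the
dense span of `φ`, so by extension and Riesz representation it is `⟪φ x, Ψ (φ y)⟫` for a bounded
self-adjoint `Ψ`. This `Ψ` vanishes on `Ω` because `K₁` and `K` agree there, hence `Ψ = 0`, so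
`K₁ = K` and then `K₂ = K`.
-/

open scoped RealInnerProductSpace

/-- A reproducing kernel on a set `X`. -/
def IsKernel {X : Type*} (K : X → X → ℝ) : Prop :=
  (∀ x y, K x y = K y x) ∧
  ∀ (n : ℕ) (α : Fin n → ℝ) (x : Fin n → X),
    0 ≤ ∑ i, ∑ j, α i * α j * K (x i) (x j)

/-- A domain on `X`: a symmetric subset of `X × X` containing the diagonal. -/
def IsCompletionDomain {X : Type*} (Ω : Set (X × X)) : Prop :=
  (∀ x y, (x, y) ∈ Ω ↔ (y, x) ∈ Ω) ∧ ∀ x, (x, x) ∈ Ω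

/-- `K` is a completion of `KΩ` on the domain `Ω`. -/
def IsCompletion {X : Type*} (Ω : Set (X × X)) (KΩ : X → X → ℝ) (K : X → X → ℝ) : Prop :=
  IsKernel K ∧ ∀ x y, (x, y) ∈ Ω → K x y = KΩ x y

open Finsupp (linearCombination linearCombination_apply single)

theorem abs_sub_le_inv_mul_of_eq_convex_comb {a b k α : ℝ} (hα₀ : 0 < α) (hα₁ : α ≤ 1)
    (ha : 0 ≤ a) (hb : 0 ≤ b) (hk : k = α * a + (1 - α) * b) : |a - k| ≤ α⁻¹ * k := by
  have hk₀ : 0 ≤ k := by rw [hk]; have := sub_nonneg.2 hα₁; positivity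
  have hαa : α * a ≤ k := by rw [hk]; nlinarith
  have hk_le : k ≤ α⁻¹ * k := by rw [le_inv_mul_iff₀ hα₀]; nlinarith
  rw [abs_le, le_inv_mul_iff₀ hα₀]
  constructor <;> nlinarith

section KernelForm

variable {X : Type*}

noncomputable def kernelForm : (X → X → ℝ) →ₗ[ℝ] LinearMap.BilinForm ℝ (X →₀ ℝ) where
  toFun J := linearCombination ℝ fun x => linearCombination ℝ (J x)
  map_add' J₁ J₂ := by ext; simp
  map_smul' a J := by ext; simp

@[simp]
theorem kernelForm_single_single (J : X → X → ℝ) (x y : X) (a b : ℝ) :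
    kernelForm J (single x a) (single y b) = a * b * J x y := by
  simp [kernelForm, mul_assoc]

theorem kernelForm_apply (J : X → X → ℝ) (c d : X →₀ ℝ) :
    kernelForm J c d = ∑ x ∈ c.support, ∑ y ∈ d.support, c x * d y * J x y := by
  simp [kernelForm, linearCombination_apply, Finsupp.sum, Finset.mul_sum, mul_assoc]

theorem kernelForm_comm {J : X → X → ℝ} (hJ : ∀ x y, J x y = J y x) (c d : X →₀ ℝ) :
    kernelForm J c d = kernelForm J d c := by
  rw [kernelForm_apply, kernelForm_apply, Finset.sum_comm]
  simp only [hJ, mul_comm (c _)]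

theorem IsKernel.kernelForm_self_nonneg {J : X → X → ℝ} (hJ : IsKernel J) (c : X →₀ ℝ) :
    0 ≤ kernelForm J c c := by
  let e := (Fintype.equivFin c.support).symm
  have hsum : ∀ g : X → ℝ, ∑ i, g (e i) = ∑ x ∈ c.support, g x := fun g => by
    rw [e.sum_comp fun x => g x, Finset.sum_coe_sort]
  rw [kernelForm_apply, ← hsum]
  simp_rw [← hsum]
  exact hJ.2 _ (fun i => c (e i)) fun i => e i

theorem abs_kernelForm_sub_le {K K₁ K₂ : X → X → ℝ} (hK₁ : IsKernel K₁) (hK₂ : IsKernel K₂)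
    {α : ℝ} (hα₀ : 0 < α) (hα₁ : α ≤ 1) (hK : K = α • K₁ + (1 - α) • K₂) (c : X →₀ ℝ) :
    |kernelForm (K₁ - K) c c| ≤ α⁻¹ * kernelForm K c c := by
  subst hK
  simp only [map_sub, map_add, map_smul, LinearMap.sub_apply, LinearMap.add_apply,
    LinearMap.smul_apply, smul_eq_mul]
  exact abs_sub_le_inv_mul_of_eq_convex_comb hα₀ hα₁ (hK₁.kernelForm_self_nonneg c)
    (hK₂.kernelForm_self_nonneg c) rfl

end KernelForm

section Realization

variable {X H : Type*} [NormedAddCommGroup H] [InnerProductSpace ℝ H]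

theorem inner_linearCombination_linearCombination (φ : X → H) (c d : X →₀ ℝ) :
    ⟪linearCombination ℝ φ c, linearCombination ℝ φ d⟫ =
      kernelForm (fun x y => ⟪φ x, φ y⟫) c d := by
  simp only [kernelForm, LinearMap.coe_mk, AddHom.coe_mk, linearCombination_apply, Finsupp.sum,
    LinearMap.coe_sum, LinearMap.coe_smul, Finset.sum_apply, Pi.smul_apply, smul_eq_mul,
    sum_inner, inner_sum, real_inner_smul_left, real_inner_smul_right, Finset.mul_sum]
  rw [Finset.sum_comm]
  simp only [mul_left_comm]

theorem sum_sum_mul_inner_apply (T : H →L[ℝ] H) {n : ℕ} (α : Fin n → ℝ) (φ : Fin n → H) :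
    ∑ i, ∑ j, α i * α j * ⟪φ i, T (φ j)⟫ = ⟪∑ i, α i • φ i, T (∑ j, α j • φ j)⟫ := by
  simp only [map_sum, map_smul, sum_inner, inner_sum, real_inner_smul_left, real_inner_smul_right,
    mul_assoc]
  rw [Finset.sum_comm]
  simp only [mul_left_comm]

theorem isKernel_inner_apply {T : H →L[ℝ] H} (hT : T.IsPositive) (φ : X → H) :
    IsKernel fun x y => ⟪φ x, T (φ y)⟫ :=
  ⟨fun _ _ => (hT.isSymmetric _ _).symm.trans (real_inner_comm _ _),
    fun _ α x => (hT.inner_nonneg_right _).trans_eq (sum_sum_mul_inner_apply T α (φ ∘ x)).symm⟩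

theorem isPositive_one_add_smul {Ψ : H →L[ℝ] H} (hΨ : (Ψ : H →ₗ[ℝ] H).IsSymmetric) {s : ℝ}
    (hs : |s| * ‖Ψ‖ ≤ 1) : (1 + s • Ψ).IsPositive := by
  refine (ContinuousLinearMap.isPositive_iff _).2 ⟨fun u v => ?_, fun v => ?_⟩
  · change ⟪(1 + s • Ψ) u, v⟫ = ⟪u, (1 + s • Ψ) v⟫
    simp only [add_apply, one_apply_eq_self, smul_apply, inner_add_left, inner_add_right,
      real_inner_smul_left, real_inner_smul_right]
    rw [show ⟪Ψ u, v⟫ = ⟪u, Ψ v⟫ from hΨ u v]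
  · have hΨv : |s * ⟪Ψ v, v⟫| ≤ ‖v‖ ^ 2 :=
      calc |s * ⟪Ψ v, v⟫| ≤ |s| * (‖Ψ‖ * ‖v‖ * ‖v‖) := by
            rw [abs_mul]
            exact mul_le_mul_of_nonneg_left
              ((abs_real_inner_le_norm _ _).trans (by gcongr; exact Ψ.le_opNorm v)) (abs_nonneg s)
        _ = |s| * ‖Ψ‖ * ‖v‖ ^ 2 := by ring
        _ ≤ ‖v‖ ^ 2 := mul_le_of_le_one_left (sq_nonneg _) hs
    simp only [add_apply, one_apply_eq_self, smul_apply, inner_add_left, real_inner_smul_left,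
      real_inner_self_eq_norm_sq]
    linarith [neg_abs_le (s * ⟪Ψ v, v⟫)]

theorem IsCompletion.add_smul_inner_apply {Ω : Set (X × X)} {KΩ K : X → X → ℝ}
    (hK : IsCompletion Ω KΩ K) {φ : X → H} (hφ : ∀ s t, ⟪φ s, φ t⟫ = K s t) {Ψ : H →L[ℝ] H}
    (hΨ : (Ψ : H →ₗ[ℝ] H).IsSymmetric) (hvan : ∀ x y, (x, y) ∈ Ω → ⟪φ x, Ψ (φ y)⟫ = 0)
    {s : ℝ} (hs : |s| * ‖Ψ‖ ≤ 1) :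
    IsCompletion Ω KΩ fun x y => K x y + s * ⟪φ x, Ψ (φ y)⟫ := by
  refine ⟨?_, fun x y hxy => by simp [hvan x y hxy, hK.2 x y hxy]⟩
  convert isKernel_inner_apply (isPositive_one_add_smul hΨ hs) φ using 2 with x y
  simp [inner_add_right, real_inner_smul_right, hφ]

theorem abs_apply_le_of_abs_apply_self_le {E : Type*} [AddCommGroup E] [Module ℝ E]
    {Q : LinearMap.BilinForm ℝ E} (hQ : ∀ c d, Q c d = Q d c) (V : E →ₗ[ℝ] H) {M : ℝ}
    (hM : 0 ≤ M) (h : ∀ c, |Q c c| ≤ M * ‖V c‖ ^ 2) (c d : E) :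
    |Q c d| ≤ M * ‖V c‖ * ‖V d‖ := by
  have hpol : ∀ u w, 2 * Q u w ≤ M * (‖V u‖ ^ 2 + ‖V w‖ ^ 2) := by
    intro u w
    have hsum := (abs_le.1 (h (u + w))).2
    have hdiff := (abs_le.1 (h (u - w))).1
    have hpar_add := norm_add_sq_real (V u) (V w)
    have hpar_sub := norm_sub_sq_real (V u) (V w)
    simp only [map_add, map_sub, LinearMap.add_apply, LinearMap.sub_apply, hQ w u] at hsum hdiff
    nlinarith
  -- `hpol` applied to `t • c` says that a quadratic polynomial in `t` is nonnegative
  have hdisc : discrim (M * ‖V c‖ ^ 2) (-(2 * Q c d)) (M * ‖V d‖ ^ 2) ≤ 0 := by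
    refine discrim_le_zero fun t => ?_
    have := hpol (t • c) d
    simp only [map_smul, LinearMap.smul_apply, smul_eq_mul, norm_smul, Real.norm_eq_abs, mul_pow,
      sq_abs] at this
    nlinarith
  rw [discrim] at hdisc
  exact abs_le_of_sq_le_sq (by nlinarith) (by positivity)

theorem eq_of_forall_inner_eq_of_dense_span {φ : X → H}
    (hdense : Dense (Submodule.span ℝ (Set.range φ) : Set H)) {u v : H}
    (h : ∀ x, ⟪φ x, u⟫ = ⟪φ x, v⟫) : u = v := by
  have : innerSL ℝ u = innerSL ℝ v :=
    ContinuousLinearMap.ext_on hdense (by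
      rintro _ ⟨x, rfl⟩
      exact (real_inner_comm _ _).trans ((h x).trans (real_inner_comm _ _)))
  exact ext_inner_right ℝ fun w => by simpa using congr($this w)

theorem ContinuousLinearMap.ext_of_inner_dense_span {φ : X → H}
    (hdense : Dense (Submodule.span ℝ (Set.range φ) : Set H)) {A B : H →L[ℝ] H}
    (h : ∀ x y, ⟪φ x, A (φ y)⟫ = ⟪φ x, B (φ y)⟫) : A = B :=
  ContinuousLinearMap.ext_on hdense <| by
    rintro _ ⟨y, rfl⟩
    exact eq_of_forall_inner_eq_of_dense_span hdense fun x => h x y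

end Realization

section Construction

variable {X H : Type*} [NormedAddCommGroup H] [InnerProductSpace ℝ H] [CompleteSpace H]

theorem exists_isSelfAdjoint_inner_apply_eq {φ : X → H}
    (hdense : Dense (Submodule.span ℝ (Set.range φ) : Set H)) {D : X → X → ℝ}
    (hD : ∀ x y, D x y = D y x) {M : ℝ} (hM : 0 ≤ M)
    (hbound : ∀ c d, |kernelForm D c d| ≤
      M * ‖linearCombination ℝ φ c‖ * ‖linearCombination ℝ φ d‖) :
    ∃ Ψ : H →L[ℝ] H, IsSelfAdjoint Ψ ∧ ∀ x y, ⟪φ x, Ψ (φ y)⟫ = D x y := by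
  set V := linearCombination ℝ φ
  have hV : DenseRange V := by
    rwa [DenseRange, ← LinearMap.coe_range, Finsupp.range_linearCombination]
  have hboundₗ : ∀ d c, ‖(kernelForm D).flip d c‖ ≤ M * ‖V d‖ * ‖V c‖ := fun d c => by
    change ‖kernelForm D c d‖ ≤ _
    rw [Real.norm_eq_abs, mul_right_comm]; exact hbound c d
  -- `g d` is the bounded extension of `kernelForm D · d` to `H`, and `ψ d` its Riesz representative
  let g (d : X →₀ ℝ) : StrongDual ℝ H := ((kernelForm D).flip d).extendOfNorm V
  have hg (c d) : g d (V c) = kernelForm D c d :=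
    LinearMap.extendOfNorm_eq hV ⟨_, hboundₗ d⟩ c
  let ψ₀ (d : X →₀ ℝ) : H := (InnerProductSpace.toDual ℝ H).symm (g d)
  have hψ₀ (x d) : ⟪φ x, ψ₀ d⟫ = kernelForm D (single x 1) d := by
    rw [real_inner_comm, InnerProductSpace.toDual_symm_apply, ← hg]; simp [V]
  let ψ : (X →₀ ℝ) →ₗ[ℝ] H :=
    { toFun := ψ₀
      map_add' := fun d d' => eq_of_forall_inner_eq_of_dense_span hdense fun x => by
        simp only [hψ₀, inner_add_right, map_add]
      map_smul' := fun a d => eq_of_forall_inner_eq_of_dense_span hdense fun x => by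
        simp only [hψ₀, real_inner_smul_right, map_smul, smul_eq_mul, RingHom.id_apply] }
  have hψ_norm (d) : ‖ψ d‖ ≤ M * ‖V d‖ := by
    change ‖(InnerProductSpace.toDual ℝ H).symm (g d)‖ ≤ _
    rw [LinearIsometryEquiv.norm_map]
    exact LinearMap.opNorm_extendOfNorm_le hV (by positivity) (hboundₗ d)
  let Ψ : H →L[ℝ] H := ψ.extendOfNorm V
  have hΨ (x y) : ⟪φ x, Ψ (φ y)⟫ = D x y := by
    have hφy : φ y = V (single y 1) := by simp [V]
    rw [hφy, LinearMap.extendOfNorm_eq hV ⟨M, hψ_norm⟩]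
    exact (hψ₀ x _).trans (by simp)
  refine ⟨Ψ, ?_, hΨ⟩
  rw [ContinuousLinearMap.isSelfAdjoint_iff']
  refine ContinuousLinearMap.ext_of_inner_dense_span hdense fun x y => ?_
  rw [ContinuousLinearMap.adjoint_inner_right, real_inner_comm, hΨ, hΨ, hD]

end Construction

theorem extremePoint_iff_selfAdjoint_vanishing_general {X H : Type*}
    [NormedAddCommGroup H] [InnerProductSpace ℝ H] [CompleteSpace H]
    (Ω : Set (X × X)) (KΩ : X → X → ℝ)
    (K : X → X → ℝ) (hK : IsCompletion Ω KΩ K)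
    (φ : X → H) (hφ : ∀ s t, ⟪φ s, φ t⟫ = K s t)
    (hdense : Dense (Submodule.span ℝ (Set.range φ) : Set H)) :
    (∀ K₁ K₂ : X → X → ℝ, IsCompletion Ω KΩ K₁ → IsCompletion Ω KΩ K₂ →
      ∀ α : ℝ, 0 < α → α < 1 → K = α • K₁ + (1 - α) • K₂ → K₁ = K ∧ K₂ = K) ↔
    (∀ Ψ : H →L[ℝ] H, (∀ f g : H, ⟪Ψ f, g⟫ = ⟪f, Ψ g⟫) →
      (∀ x y, (x, y) ∈ Ω → ⟪φ x, Ψ (φ y)⟫ = 0) → Ψ = 0) := by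
  constructor
  · intro hext Ψ hΨ hvan
    have hε : 0 < (1 + ‖Ψ‖)⁻¹ := by positivity
    have hεΨ : |(1 + ‖Ψ‖)⁻¹| * ‖Ψ‖ ≤ 1 := by
      rw [abs_of_pos hε, inv_mul_le_iff₀ (by positivity)]; linarith
    obtain ⟨hP, -⟩ := hext _ _ (hK.add_smul_inner_apply hφ hΨ hvan hεΨ)
      (hK.add_smul_inner_apply hφ hΨ hvan (s := -(1 + ‖Ψ‖)⁻¹) (by rwa [abs_neg]))
      (1 / 2) (by norm_num) (by norm_num)
      (by ext; simp only [Pi.add_apply, Pi.smul_apply, smul_eq_mul]; ring)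
    refine ContinuousLinearMap.ext_of_inner_dense_span hdense fun x y => ?_
    simpa [hε.ne'] using congrFun₂ hP x y
  · intro hop K₁ K₂ hK₁ hK₂ α hα₀ hα₁ hKα
    have hdiag (c : X →₀ ℝ) :
        |kernelForm (K₁ - K) c c| ≤ α⁻¹ * ‖linearCombination ℝ φ c‖ ^ 2 := by
      rw [← real_inner_self_eq_norm_sq, inner_linearCombination_linearCombination]
      simpa only [hφ] using abs_kernelForm_sub_le hK₁.1 hK₂.1 hα₀ hα₁.le hKα c
    have hsymm (x y : X) : (K₁ - K) x y = (K₁ - K) y x := by simp [hK₁.1.1 x y, hK.1.1 x y]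
    obtain ⟨Ψ, hΨ, hΨD⟩ := exists_isSelfAdjoint_inner_apply_eq hdense hsymm (inv_nonneg.2 hα₀.le)
      (abs_apply_le_of_abs_apply_self_le (kernelForm_comm hsymm) _ (inv_nonneg.2 hα₀.le) hdiag)
    have hΨ₀ : Ψ = 0 := hop Ψ hΨ.isSymmetric fun x y hxy => by
      simp [hΨD, hK₁.2 x y hxy, hK.2 x y hxy]
    have hK₁K : K₁ = K := by
      ext x y
      simpa [hΨ₀, sub_eq_zero, eq_comm] using hΨD x y
    refine ⟨hK₁K, funext₂ fun x y => mul_left_cancel₀ (sub_ne_zero.2 hα₁.ne') ?_⟩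
    have := congrFun₂ hKα x y
    simp only [hK₁K, Pi.add_apply, Pi.smul_apply, smul_eq_mul] at this
    linarith

/-- A completion `K` is an extreme point of the set of completions iff the only self-adjoint
bounded operator `Ψ` on a realization of `K` with `⟪φ x, Ψ (φ y)⟫ = 0` on `Ω` is `Ψ = 0`. -/
theorem extremePoint_iff_selfAdjoint_vanishing {X H : Type*}
    [NormedAddCommGroup H] [InnerProductSpace ℝ H] [CompleteSpace H]
    (Ω : Set (X × X)) (hΩ : IsCompletionDomain Ω) (KΩ : X → X → ℝ)
    (K : X → X → ℝ) (hK : IsCompletion Ω KΩ K)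
    (φ : X → H) (hφ : ∀ s t, ⟪φ s, φ t⟫ = K s t)
    (hdense : Dense (Submodule.span ℝ (Set.range φ) : Set H)) :
    (∀ K₁ K₂ : X → X → ℝ, IsCompletion Ω KΩ K₁ → IsCompletion Ω KΩ K₂ →
      ∀ α : ℝ, 0 < α → α < 1 → K = α • K₁ + (1 - α) • K₂ → K₁ = K ∧ K₂ = K) ↔
    (∀ Ψ : H →L[ℝ] H, (∀ f g : H, ⟪Ψ f, g⟫ = ⟪f, Ψ g⟫) →
      (∀ x y, (x, y) ∈ Ω → ⟪φ x, Ψ (φ y)⟫ = 0) → Ψ = 0) :=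
  extremePoint_iff_selfAdjoint_vanishing_general Ω KΩ K hK φ hφ hdense
end

section
/- Let X be a set, Ω a domain on X, and K_Ω : Ω → ℝ. Then K_Ω admits a completion if and only if for every finite subset F ⊆ X, the restriction of K_Ω to Ω ∩ (F × F) admits a completion on F, i.e., there is a reproducing kernel on F agreeing with K_Ω on Ω ∩ (F × F). -/
/-!
A completion is a point of the compact box `∏_{x,y} [-c x y, c x y]`, `c x y = √(KΩ x x * KΩ y y)`
(Cauchy–Schwarz bounds every entry of a kernel by its diagonal, which `KΩ` prescribes), lying in
the closed sets of functions whose restriction to a finite set `F` is a completion on `F`.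
Extending a completion on `F` by zero shows that these closed sets meet the box with the finite
intersection property, so by Tychonoff the whole intersection is nonempty.
-/

open Set

section

variable {X Y : Type*}

namespace IsKernel

variable {K : X → X → ℝ}

theorem comp (hK : IsKernel K) (f : Y → X) : IsKernel fun a b => K (f a) (f b) :=
  ⟨fun a b => hK.1 (f a) (f b), fun n α x => hK.2 n α (f ∘ x)⟩

theorem sq_le_mul (hK : IsKernel K) (x y : X) : K x y ^ 2 ≤ K x x * K y y := by
  have hquad : ∀ s : ℝ, 0 ≤ K x x * (s * s) + 2 * K x y * s + K y y := fun s => by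
    have h := hK.2 2 ![s, 1] ![x, y]
    simp only [Fin.sum_univ_two, Matrix.cons_val_zero, Matrix.cons_val_one] at h
    rw [hK.1 y x] at h
    linarith
  have hdisc := discrim_le_zero hquad
  rw [discrim] at hdisc
  linarith

theorem abs_le_sqrt (hK : IsKernel K) (x y : X) : |K x y| ≤ √(K x x * K y y) :=
  Real.abs_le_sqrt (hK.sq_le_mul x y)

end IsKernel

theorem isKernel_iff_forall_finset {K : X → X → ℝ} :
    IsKernel K ↔ ∀ F : Finset X, IsKernel fun x y : F => K x y := by
  classical
  refine ⟨fun hK F => hK.comp _, fun h => ⟨fun x y => ?_, fun n α x => ?_⟩⟩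
  · exact (h {x, y}).1 ⟨x, by simp⟩ ⟨y, by simp⟩
  · exact (h (Finset.univ.image x)).2 n α fun i =>
      ⟨x i, Finset.mem_image_of_mem x (Finset.mem_univ i)⟩

theorem isClosed_setOf_isKernel : IsClosed {K : X → X → ℝ | IsKernel K} := by
  simp only [IsKernel, ofPred_and, ofPred_forall]
  exact (isClosed_iInter fun x => isClosed_iInter fun y =>
      isClosed_eq (by fun_prop) (by fun_prop)).inter
    (isClosed_iInter fun n => isClosed_iInter fun α => isClosed_iInter fun x =>
      isClosed_le continuous_const (by fun_prop))

theorem isClosed_setOf_isCompletion (Ω : Set (X × X)) (KΩ : X → X → ℝ) :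
    IsClosed {K : X → X → ℝ | IsCompletion Ω KΩ K} := by
  simp only [IsCompletion, ofPred_and, ofPred_forall]
  exact isClosed_setOf_isKernel.inter (isClosed_iInter fun x => isClosed_iInter fun y =>
    isClosed_iInter fun _ => isClosed_eq (by fun_prop) continuous_const)

theorem IsCompletion.comp {Ω : Set (X × X)} {KΩ K : X → X → ℝ} (hK : IsCompletion Ω KΩ K)
    (f : Y → X) :
    IsCompletion (Prod.map f f ⁻¹' Ω) (fun a b => KΩ (f a) (f b)) (fun a b => K (f a) (f b)) :=
  ⟨hK.1.comp f, fun a b hab => hK.2 (f a) (f b) hab⟩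

def IsCompletionOn (Ω : Set (X × X)) (KΩ K : X → X → ℝ) (F : Finset X) : Prop :=
  IsCompletion (Prod.map (↑) (↑) ⁻¹' Ω : Set (F × F)) (fun x y : F => KΩ x y)
    (fun x y : F => K x y)

variable {Ω : Set (X × X)} {KΩ K : X → X → ℝ}

theorem IsCompletionOn.mono {F G : Finset X} (hK : IsCompletionOn Ω KΩ K G) (hFG : F ⊆ G) :
    IsCompletionOn Ω KΩ K F :=
  hK.comp fun a : F => (⟨a, hFG a.2⟩ : G)

theorem isCompletion_iff_forall_isCompletionOn :
    IsCompletion Ω KΩ K ↔ ∀ F : Finset X, IsCompletionOn Ω KΩ K F := by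
  classical
  refine ⟨fun hK F => hK.comp _, fun h => ⟨?_, fun x y hxy => ?_⟩⟩
  · exact isKernel_iff_forall_finset.2 fun F => (h F).1
  · exact (h {x, y}).2 ⟨x, by simp⟩ ⟨y, by simp⟩ hxy

theorem isClosed_setOf_isCompletionOn (Ω : Set (X × X)) (KΩ : X → X → ℝ) (F : Finset X) :
    IsClosed {K : X → X → ℝ | IsCompletionOn Ω KΩ K F} :=
  (isClosed_setOf_isCompletion _ _).preimage (by fun_prop)

theorem isCompact_setOf_forall_abs_le (c : X → X → ℝ) :
    IsCompact {K : X → X → ℝ | ∀ x y, |K x y| ≤ c x y} := by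
  have hbox : {K : X → X → ℝ | ∀ x y, |K x y| ≤ c x y} =
      pi univ fun x => pi univ fun y => Icc (-c x y) (c x y) := by
    ext K
    simp only [mem_ofPred_eq, mem_pi, mem_univ, true_implies, mem_Icc, abs_le]
  rw [hbox]
  exact isCompact_univ_pi fun x => isCompact_univ_pi fun y => isCompact_Icc

theorem exists_isCompletionOn_abs_le (hdiag : ∀ x, (x, x) ∈ Ω) {F : Finset X} {KF : F → F → ℝ}
    (hKF : IsCompletion (Prod.map (↑) (↑) ⁻¹' Ω) (fun x y : F => KΩ x y) KF) :
    ∃ K : X → X → ℝ, IsCompletionOn Ω KΩ K F ∧ ∀ x y, |K x y| ≤ √(KΩ x x * KΩ y y) := by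
  classical
  set K : X → X → ℝ := fun x y => if h : x ∈ F ∧ y ∈ F then KF ⟨x, h.1⟩ ⟨y, h.2⟩ else 0
  have hrestrict : (fun x y : F => K x y) = KF := by
    ext x y
    simp [K]
  refine ⟨K, by rwa [IsCompletionOn, hrestrict], fun x y => ?_⟩
  by_cases h : x ∈ F ∧ y ∈ F
  · have hbound := hKF.1.abs_le_sqrt ⟨x, h.1⟩ ⟨y, h.2⟩
    rw [hKF.2 ⟨x, h.1⟩ ⟨x, h.1⟩ (hdiag x), hKF.2 ⟨y, h.2⟩ ⟨y, h.2⟩ (hdiag y)] at hbound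
    simpa only [K, dif_pos h] using hbound
  · simp only [K, dif_neg h, abs_zero]
    positivity

end

/-- `KΩ` admits a completion iff every finite restriction admits a completion. -/
theorem completion_exists_iff_finite_subproblems {X : Type*}
    (Ω : Set (X × X)) (hΩ : IsCompletionDomain Ω) (KΩ : X → X → ℝ) :
    (∃ K : X → X → ℝ, IsCompletion Ω KΩ K) ↔
      ∀ F : Finset X, ∃ KF : F → F → ℝ, IsKernel KF ∧
        ∀ x y : F, ((x : X), (y : X)) ∈ Ω → KF x y = KΩ x y := by
  classical
  refine ⟨fun ⟨K, hK⟩ F => ⟨fun x y : F => K x y, hK.comp Subtype.val⟩, fun h => ?_⟩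
  have hbox := isCompact_setOf_forall_abs_le fun x y => √(KΩ x x * KΩ y y)
  obtain ⟨K, -, hK⟩ := hbox.inter_iInter_nonempty _ (isClosed_setOf_isCompletionOn Ω KΩ) fun u => by
    obtain ⟨KF, hKF⟩ := h (u.sup id)
    obtain ⟨K, hK, hbound⟩ := exists_isCompletionOn_abs_le hΩ.2 hKF
    exact ⟨K, hbound, mem_iInter₂.2 fun F hF => hK.mono (Finset.le_sup (f := id) hF)⟩
  exact ⟨K, isCompletion_iff_forall_isCompletionOn.2 (mem_iInter.1 hK)⟩
end

section
/- Let X be a set, Ω a domain on X, K_Ω : Ω → ℝ symmetric, and suppose 𝒞(K_Ω) is nonempty. Fix (x,y) ∈ (X × X) ∖ Ω (so x ≠ y). Then sup{K(x,y) : K ∈ 𝒞(K_Ω)} equals the infimum of ℛ_{xy}(M,F) over all admissible pairs (M,F) for (x,y) with m_{xy} < 0, and inf{K(x,y) : K ∈ 𝒞(K_Ω)} equals the supremum of ℛ_{xy}(M,F) over all admissible pairs (M,F) for (x,y) with m_{xy} > 0. -/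
/-- An admissible pair `(M, F)` for the point `(x, y) ∉ Ω`: a finite set `F` containing `x` and
`y`, and a symmetric positive semidefinite matrix indexed by `F` vanishing outside
`Ω ∪ {(x,y), (y,x)}`. -/
def Admissible {X : Type*} (Ω : Set (X × X)) (x y : X) (F : Finset X)
    (M : Matrix ↥F ↥F ℝ) : Prop :=
  M.PosSemidef ∧
    ∀ u v : ↥F, ((u : X), (v : X)) ∉ Ω ∪ {(x, y), (y, x)} → M u v = 0

open scoped Classical in
/-- The quantity `ℛ_{xy}(M, F)`. -/
noncomputable def Rval {X : Type*} (Ω : Set (X × X)) (KΩ : X → X → ℝ)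
    (F : Finset X) (M : Matrix ↥F ↥F ℝ) (a b : ↥F) : ℝ :=
  -(1 / (2 * M a b)) * ∑ u : ↥F, ∑ v : ↥F,
    if ((u : X), (v : X)) ∈ Ω then M u v * KΩ u v else 0

/-!
A completion with `K(x, y) = t` is the same as a completion of the data extended by `t` at
`(x, y)` and `(y, x)`. Data on a domain has a completion iff it pairs nonnegatively with every
positive semidefinite matrix supported on the domain: necessity is the Schur product theorem;
sufficiency holds on each finite set by separating the data from the closed cone of restrictions
of positive semidefinite matrices, and passes to `X` by compactness, since the entries of a
completion are bounded by `√(K(u,u) K(v,v))`. For an admissible pair the pairing equals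
`∑_Ω m_{uv} K_Ω(u,v) + 2 m_{xy} t`, which is nonnegative iff `t ≤ ℛ_{xy}(M,F)` when `m_{xy} < 0`
and iff `t ≥ ℛ_{xy}(M,F)` when `m_{xy} > 0`. Hence the values `K(x, y)` of completions are
exactly the lower bounds of the first family of `ℛ_{xy}` that are upper bounds of the second.
-/

open Matrix

namespace Matrix

variable {n : Type*}

lemma PosSemidef.sq_apply_le {A : Matrix n n ℝ} (hA : A.PosSemidef) (u v : n) :
    A u v ^ 2 ≤ A u u * A v v := by
  have h := (hA.submatrix ![u, v]).det_nonneg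
  have hsymm : A v u = A u v := by simpa using hA.isHermitian.apply u v
  rw [det_fin_two] at h
  simp only [submatrix_apply, cons_val_zero, cons_val_one, hsymm] at h
  nlinarith

lemma PosSemidef.abs_apply_le {A : Matrix n n ℝ} (hA : A.PosSemidef) (u v : n) :
    |A u v| ≤ √(A u u * A v v) :=
  Real.abs_le_sqrt (hA.sq_apply_le u v)

lemma posSemidef_of_forall_finset_submatrix {R : Type*} [Ring R] [PartialOrder R] [StarRing R]
    {A : Matrix n n R} (h : ∀ s : Finset n, (A.submatrix ((↑) : s → n) (↑)).PosSemidef) :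
    A.PosSemidef := by
  classical
  refine ⟨?_, fun x ↦ ?_⟩
  · ext u v
    simpa using (h {u, v}).isHermitian.apply ⟨u, by simp⟩ ⟨v, by simp⟩
  · simpa [Finsupp.sum, ← Finset.sum_attach x.support, ← Finset.subtype_mem_eq_attach,
      ← Finsupp.subtypeDomain_apply, ← Finsupp.support_subtypeDomain] using
      (h x.support).2 (x.subtypeDomain (· ∈ x.support))

lemma isCompact_setOf_abs_apply_le (c : n → n → ℝ) :
    IsCompact {K : Matrix n n ℝ | ∀ u v, |K u v| ≤ c u v} := by
  have : {K : Matrix n n ℝ | ∀ u v, |K u v| ≤ c u v} =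
      Set.univ.pi fun u ↦ Set.univ.pi fun v ↦ Set.Icc (-c u v) (c u v) := by
    ext K
    exact ⟨fun h u _ v _ ↦ abs_le.1 (h u v), fun h u v ↦ abs_le.2 (h u trivial v trivial)⟩
  exact this ▸ isCompact_univ_pi fun u ↦ isCompact_univ_pi fun v ↦ isCompact_Icc

noncomputable def restrictTo (E : Set (n × n)) : Matrix n n ℝ →ₗ[ℝ] Matrix n n ℝ where
  toFun A := of fun u v ↦ E.indicator (fun p ↦ A p.1 p.2) (u, v)
  map_add' A B := by ext u v; simp [Set.indicator_add]
  map_smul' c A := by ext u v; by_cases h : (u, v) ∈ E <;> simp [h]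

lemma restrictTo_apply_of_mem {E : Set (n × n)} {A : Matrix n n ℝ} {u v : n} (h : (u, v) ∈ E) :
    restrictTo E A u v = A u v := by
  simp [restrictTo, Set.indicator_of_mem h]

lemma restrictTo_apply_of_notMem {E : Set (n × n)} {A : Matrix n n ℝ} {u v : n}
    (h : (u, v) ∉ E) : restrictTo E A u v = 0 := by
  simp [restrictTo, Set.indicator_of_notMem h]

instance : LocallyConvexSpace ℝ (Matrix n n ℝ) :=
  inferInstanceAs (LocallyConvexSpace ℝ (n → n → ℝ))

variable (n) in
def posSemidefCone : PointedCone ℝ (Matrix n n ℝ) where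
  carrier := {A | A.PosSemidef}
  add_mem' := PosSemidef.add
  zero_mem' := PosSemidef.zero
  smul_mem' c _ hA := hA.smul c.2

@[simp]
lemma mem_posSemidefCone {A : Matrix n n ℝ} : A ∈ posSemidefCone n ↔ A.PosSemidef := Iff.rfl

section Finite

variable [Fintype n]

lemma PosSemidef.sum_mul_nonneg {A B : Matrix n n ℝ} (hA : A.PosSemidef) (hB : B.PosSemidef) :
    0 ≤ ∑ u, ∑ v, A u v * B u v := by
  have := (hA.hadamard hB).dotProduct_mulVec_nonneg 1
  simpa only [dotProduct, mulVec, hadamard_apply, star_trivial, Pi.one_apply, one_mul,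
    mul_one] using this

lemma isClosed_setOf_posSemidef : IsClosed {A : Matrix n n ℝ | A.PosSemidef} := by
  simp only [posSemidef_iff_dotProduct_mulVec, Set.ofPred_and, Set.ofPred_forall]
  refine .inter (isClosed_eq (by fun_prop) continuous_id) (isClosed_iInter fun x ↦ ?_)
  exact isClosed_le continuous_const (by simp only [dotProduct, mulVec]; fun_prop)

lemma isClosed_restrictTo_image_posSemidef {E : Set (n × n)} (hdiag : ∀ u, (u, u) ∈ E) :
    IsClosed (restrictTo E '' {A | A.PosSemidef}) := by
  rw [← closure_subset_iff_isClosed]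
  intro p hp
  -- Near `p` the diagonal, which `restrictTo E` keeps, is bounded by `R`, and a PSD matrix
  -- with bounded diagonal lies in a compact set.
  set R := ∑ u, |p u u| + 1
  have hR : 0 ≤ R := by positivity
  have hU : IsOpen {q : Matrix n n ℝ | ∀ u, q u u < R} := by
    simp only [Set.ofPred_forall]
    exact isOpen_iInter_of_finite fun u ↦ isOpen_lt (by fun_prop) continuous_const
  have hpU : ∀ u, p u u < R := fun u ↦ by
    have := Finset.single_le_sum (fun i _ ↦ abs_nonneg (p i i)) (Finset.mem_univ u)
    linarith [le_abs_self (p u u)]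
  set T := {A : Matrix n n ℝ | A.PosSemidef ∧ ∀ u, A u u ≤ R}
  have hT : IsCompact T := by
    refine (isCompact_setOf_abs_apply_le fun _ _ ↦ R).of_isClosed_subset ?_
      fun A ⟨hA, hAR⟩ u v ↦ ?_
    · simp only [T, Set.ofPred_and, Set.ofPred_forall]
      exact isClosed_setOf_posSemidef.inter
        (isClosed_iInter fun u ↦ isClosed_le (by fun_prop) continuous_const)
    · calc |A u v| ≤ √(A u u * A v v) := hA.abs_apply_le u v
        _ ≤ √(R * R) := Real.sqrt_le_sqrt (mul_le_mul (hAR u) (hAR v) hA.diag_nonneg hR)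
        _ = R := Real.sqrt_mul_self hR
  have hsub : {q | ∀ u, q u u < R} ∩ restrictTo E '' {A | A.PosSemidef} ⊆ restrictTo E '' T := by
    rintro _ ⟨hq, A, hA, rfl⟩
    exact ⟨A, ⟨hA, fun u ↦ by simpa [restrictTo_apply_of_mem (hdiag u)] using (hq u).le⟩, rfl⟩
  have hclosed : IsClosed (restrictTo E '' T) :=
    (hT.image (LinearMap.continuous_of_finiteDimensional _)).isClosed
  obtain ⟨A, hA, hAp⟩ := hclosed.closure_eq ▸ closure_mono hsub (hU.inter_closure ⟨hpU, hp⟩)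
  exact ⟨A, hA.1, hAp⟩

lemma linearMap_apply_eq_sum [DecidableEq n] (f : Matrix n n ℝ →ₗ[ℝ] ℝ) (A : Matrix n n ℝ) :
    f A = ∑ u, ∑ v, A u v * f (single u v 1) := by
  conv_lhs => rw [matrix_eq_sum_single A]
  simp only [map_sum]
  refine Finset.sum_congr rfl fun u _ ↦ Finset.sum_congr rfl fun v _ ↦ ?_
  rw [← smul_eq_mul, ← map_smul, smul_single, smul_eq_mul, mul_one]

lemma exists_sum_mul_eq_apply_restrictTo {E : Set (n × n)}
    (hE : ∀ u v, (u, v) ∈ E → (v, u) ∈ E) (f : Matrix n n ℝ →ₗ[ℝ] ℝ) :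
    ∃ M : Matrix n n ℝ, (∀ u v, M u v = M v u) ∧ (∀ u v, (u, v) ∉ E → M u v = 0) ∧
      ∀ A : Matrix n n ℝ, (∀ u v, (u, v) ∈ E → A u v = A v u) →
        f (restrictTo E A) = ∑ u, ∑ v, M u v * A u v := by
  classical
  set Z : Matrix n n ℝ := of fun u v ↦ f (restrictTo E (single u v 1))
  have hZ : ∀ u v, (u, v) ∉ E → Z u v = 0 := fun u v huv ↦ by
    have : restrictTo E (single u v (1 : ℝ)) = 0 := by
      ext u' v'
      by_cases h' : (u', v') ∈ E
      · simp only [restrictTo_apply_of_mem h', single_apply, zero_apply, ite_eq_right_iff]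
        rintro ⟨rfl, rfl⟩
        exact absurd h' huv
      · simp [restrictTo_apply_of_notMem h']
    simp [Z, this]
  refine ⟨of fun u v ↦ (Z u v + Z v u) / 2, fun u v ↦ by simp only [of_apply]; ring,
    fun u v huv ↦ by simp only [of_apply, hZ u v huv, hZ v u (mt (hE v u) huv)]; norm_num,
    fun A hA ↦ ?_⟩
  have hswap : ∑ u, ∑ v, Z v u * A u v = ∑ u, ∑ v, Z u v * A u v := by
    rw [Finset.sum_comm]
    refine Finset.sum_congr rfl fun u _ ↦ Finset.sum_congr rfl fun v _ ↦ ?_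
    by_cases huv : (u, v) ∈ E
    · rw [hA u v huv]
    · simp [hZ u v huv]
  have hMA : ∀ u v, (Z u v + Z v u) / 2 * A u v = (Z u v * A u v + Z v u * A u v) / 2 :=
    fun u v ↦ by ring
  have hf := linearMap_apply_eq_sum (f ∘ₗ restrictTo E) A
  simp only [LinearMap.comp_apply] at hf
  simp only [of_apply]
  simp_rw [hf, hMA, ← Finset.sum_div, Finset.sum_add_distrib, hswap]
  simp only [Z, of_apply, mul_comm]
  ring

theorem exists_posSemidef_eqOn_of_pairing_nonneg {E : Set (n × n)}
    (hE : ∀ u v, (u, v) ∈ E → (v, u) ∈ E) (hdiag : ∀ u, (u, u) ∈ E) {G : Matrix n n ℝ}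
    (hG : ∀ u v, (u, v) ∈ E → G u v = G v u)
    (h : ∀ M : Matrix n n ℝ, M.PosSemidef → (∀ u v, (u, v) ∉ E → M u v = 0) →
      0 ≤ ∑ u, ∑ v, M u v * G u v) :
    ∃ B : Matrix n n ℝ, B.PosSemidef ∧ ∀ u v, (u, v) ∈ E → B u v = G u v := by
  let C : ProperCone ℝ (Matrix n n ℝ) :=
    ⟨(posSemidefCone n).map (restrictTo E), isClosed_restrictTo_image_posSemidef hdiag⟩
  by_cases hGC : restrictTo E G ∈ C
  · obtain ⟨B, hB, hBG⟩ := hGC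
    exact ⟨B, hB, fun u v huv ↦ by
      simpa [restrictTo_apply_of_mem huv] using congrFun (congrFun hBG u) v⟩
  -- The separating functional is the pairing with a PSD matrix `M` on `E` with `⟪M, G⟫ < 0`.
  obtain ⟨f, hfC, hfG⟩ := C.hyperplane_separation_point hGC
  obtain ⟨M, hMsymm, hMsupp, hfM⟩ := exists_sum_mul_eq_apply_restrictTo hE f.toLinearMap
  simp only [ContinuousLinearMap.coe_coe] at hfM
  have hMpsd : M.PosSemidef := by
    refine .of_dotProduct_mulVec_nonneg (by ext u v; exact hMsymm v u) fun w ↦ ?_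
    have hww : restrictTo E (vecMulVec w w) ∈ C :=
      ⟨_, by simpa using posSemidef_vecMulVec_self_star w, rfl⟩
    calc 0 ≤ f (restrictTo E (vecMulVec w w)) := hfC _ hww
      _ = ∑ u, ∑ v, M u v * vecMulVec w w u v :=
        hfM _ fun u v _ ↦ by simp only [vecMulVec_apply, mul_comm]
      _ = star w ⬝ᵥ M *ᵥ w := by
        simp only [dotProduct, mulVec, vecMulVec_apply, star_trivial, Finset.mul_sum]
        exact Finset.sum_congr rfl fun u _ ↦ Finset.sum_congr rfl fun v _ ↦ by ring
  exact ((h M hMpsd hMsupp).not_gt (hfM G hG ▸ hfG)).elim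

end Finite

theorem exists_posSemidef_eqOn_of_forall_finset {Ω : Set (n × n)} (hdiag : ∀ u, (u, u) ∈ Ω)
    (D : Matrix n n ℝ)
    (h : ∀ s : Finset n, ∃ B : Matrix s s ℝ, B.PosSemidef ∧
      ∀ u v : s, ((u : n), (v : n)) ∈ Ω → B u v = D u v) :
    ∃ K : Matrix n n ℝ, K.PosSemidef ∧ ∀ u v, (u, v) ∈ Ω → K u v = D u v := by
  classical
  set box := {K : Matrix n n ℝ | ∀ u v, |K u v| ≤ √(D u u * D v v)}
  have hbox : IsCompact box := isCompact_setOf_abs_apply_le _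
  set S : Finset n → Set (Matrix n n ℝ) := fun s ↦ box ∩
    {K | (K.submatrix ((↑) : s → n) (↑)).PosSemidef ∧
      ∀ u v : s, ((u : n), (v : n)) ∈ Ω → K u v = D u v}
  have hS_closed : ∀ s, IsClosed (S s) := fun s ↦ by
    refine .inter hbox.isClosed ?_
    simp only [Set.ofPred_and, Set.ofPred_forall]
    refine .inter (isClosed_setOf_posSemidef.preimage (by fun_prop)) ?_
    exact isClosed_iInter fun u ↦ isClosed_iInter fun v ↦ isClosed_iInter fun _ ↦
      isClosed_eq (by fun_prop) continuous_const
  have hS_anti : Antitone S := fun s t hst K ⟨hK, hKpsd, hKD⟩ ↦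
    ⟨hK, hKpsd.submatrix fun u : s ↦ (⟨u, hst u.2⟩ : t),
      fun u v ↦ hKD ⟨u, hst u.2⟩ ⟨v, hst v.2⟩⟩
  have hS_nonempty : ∀ s, (S s).Nonempty := fun s ↦ by
    obtain ⟨B, hB, hBD⟩ := h s
    refine ⟨of fun u v ↦ if h : u ∈ s ∧ v ∈ s then B ⟨u, h.1⟩ ⟨v, h.2⟩ else 0, fun u v ↦ ?_,
      ?_, fun u v huv ↦ ?_⟩
    · simp only [of_apply]
      split_ifs with huv
      · simpa [hBD _ _ (hdiag _)] using hB.abs_apply_le ⟨u, huv.1⟩ ⟨v, huv.2⟩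
      · simp
    · convert hB
      ext u v
      simp
    · simpa using hBD u v huv
  obtain ⟨K, hK⟩ := IsCompact.nonempty_iInter_of_directed_nonempty_isCompact_isClosed S
    hS_anti.directed_ge hS_nonempty
    (fun s ↦ hbox.of_isClosed_subset (hS_closed s) Set.inter_subset_left) hS_closed
  simp only [Set.mem_iInter] at hK
  refine ⟨K, posSemidef_of_forall_finset_submatrix fun s ↦ (hK s).2.1, fun u v huv ↦ ?_⟩
  exact (hK {u, v}).2.2 ⟨u, by simp⟩ ⟨v, by simp⟩ huv

end Matrix

section Completion

variable {X : Type*} {Ω : Set (X × X)} {KΩ : X → X → ℝ}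

lemma isKernel_iff_posSemidef {K : X → X → ℝ} : IsKernel K ↔ (of K).PosSemidef := by
  refine ⟨fun ⟨hsymm, hform⟩ ↦ posSemidef_of_forall_finset_submatrix fun s ↦ ?_,
    fun hK ↦ ⟨fun u v ↦ ?_, fun n α ξ ↦ ?_⟩⟩
  · rw [← posSemidef_submatrix_equiv (Fintype.equivFin s).symm, submatrix_submatrix]
    refine .of_dotProduct_mulVec_nonneg (by ext u v; exact hsymm _ _) fun α ↦ ?_
    refine (hform _ α fun i ↦ (Fintype.equivFin s).symm i).trans_eq ?_
    simp only [dotProduct, mulVec, Finset.mul_sum, star_trivial, submatrix_apply, of_apply,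
      Function.comp_apply]
    exact Finset.sum_congr rfl fun i _ ↦ Finset.sum_congr rfl fun j _ ↦ by ring
  · simpa using (hK.isHermitian.apply u v).symm
  · refine ((hK.submatrix ξ).dotProduct_mulVec_nonneg α).trans_eq ?_
    simp only [dotProduct, mulVec, Finset.mul_sum, star_trivial, submatrix_apply, of_apply]
    exact Finset.sum_congr rfl fun i _ ↦ Finset.sum_congr rfl fun j _ ↦ by ring

lemma IsKernel.sum_mul_nonneg {K : X → X → ℝ} (hK : IsKernel K) {F : Finset X}
    {M : Matrix F F ℝ} (hM : M.PosSemidef) : 0 ≤ ∑ u, ∑ v, M u v * K u v :=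
  hM.sum_mul_nonneg ((isKernel_iff_posSemidef.1 hK).submatrix _)

theorem exists_completion_of_pairing_nonneg (hΩ : IsCompletionDomain Ω)
    (hsymm : ∀ u v, (u, v) ∈ Ω → KΩ u v = KΩ v u)
    (h : ∀ (F : Finset X) (M : Matrix F F ℝ), M.PosSemidef →
      (∀ u v : F, ((u : X), (v : X)) ∉ Ω → M u v = 0) → 0 ≤ ∑ u, ∑ v, M u v * KΩ u v) :
    ∃ K, IsCompletion Ω KΩ K := by
  obtain ⟨K, hK, hKΩ⟩ := exists_posSemidef_eqOn_of_forall_finset hΩ.2 (of KΩ) fun F ↦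
    exists_posSemidef_eqOn_of_pairing_nonneg (E := {p : F × F | ((p.1 : X), (p.2 : X)) ∈ Ω})
      (fun u v ↦ (hΩ.1 u v).1) (fun u ↦ hΩ.2 u) (G := of fun u v : F ↦ KΩ u v)
      (fun u v ↦ hsymm u v) (h F)
  exact ⟨K, isKernel_iff_posSemidef.2 hK, hKΩ⟩

end Completion

open scoped Classical in
noncomputable def dataPairing {X : Type*} (Ω : Set (X × X)) (KΩ : X → X → ℝ) (F : Finset X)
    (M : Matrix F F ℝ) : ℝ :=
  ∑ u : F, ∑ v : F, if ((u : X), (v : X)) ∈ Ω then M u v * KΩ u v else 0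

section Admissible

variable {X : Type*} {Ω : Set (X × X)} {KΩ : X → X → ℝ} {x y : X} {F : Finset X}
  {M : Matrix F F ℝ}

lemma Admissible.sum_mul_eq (hΩ : IsCompletionDomain Ω) (hxy : (x, y) ∉ Ω)
    (hM : Admissible Ω x y F M) (hx : x ∈ F) (hy : y ∈ F) {K : X → X → ℝ}
    (hK : ∀ u v, (u, v) ∈ Ω → K u v = KΩ u v) (hKxy : K y x = K x y) :
    ∑ u, ∑ v, M u v * K u v = dataPairing Ω KΩ F M + 2 * M ⟨x, hx⟩ ⟨y, hy⟩ * K x y := by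
  classical
  have hne : x ≠ y := fun h ↦ hxy (h ▸ hΩ.2 x)
  have hyx : (y, x) ∉ Ω := mt (hΩ.1 y x).1 hxy
  have hMyx : M ⟨y, hy⟩ ⟨x, hx⟩ = M ⟨x, hx⟩ ⟨y, hy⟩ := by
    simpa using hM.1.isHermitian.apply ⟨x, hx⟩ ⟨y, hy⟩
  set N : F → F → ℝ := fun u v ↦ if ((u : X), (v : X)) ∈ Ω then 0 else M u v * K u v
  have hsplit : ∑ u, ∑ v, M u v * K u v = dataPairing Ω KΩ F M + ∑ u, ∑ v, N u v := by
    simp only [dataPairing, N, ← Finset.sum_add_distrib]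
    refine Finset.sum_congr rfl fun u _ ↦ Finset.sum_congr rfl fun v _ ↦ ?_
    by_cases h : ((u : X), (v : X)) ∈ Ω
    · simp [h, hK _ _ h]
    · simp [h]
  have hN : ∀ p : F × F, p ≠ (⟨x, hx⟩, ⟨y, hy⟩) ∧ p ≠ (⟨y, hy⟩, ⟨x, hx⟩) → N p.1 p.2 = 0 := by
    rintro ⟨u, v⟩ ⟨hpxy, hpyx⟩
    by_cases h : ((u : X), (v : X)) ∈ Ω
    · simp [N, h]
    · simp only [N, if_neg h]
      rw [hM.2 u v ?_, zero_mul]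
      rintro (h' | h' | h')
      · exact h h'
      · exact hpxy (by simp_all [Prod.ext_iff, Subtype.ext_iff])
      · exact hpyx (by simp_all [Prod.ext_iff, Subtype.ext_iff])
  rw [hsplit, ← Fintype.sum_prod_type', Fintype.sum_eq_add _ _ (by simp [hne]) hN]
  simp only [N, if_neg hxy, if_neg hyx, hMyx, hKxy]
  ring

lemma le_rval_iff {a b : F} (hm : M a b < 0) {t : ℝ} :
    t ≤ Rval Ω KΩ F M a b ↔ 0 ≤ dataPairing Ω KΩ F M + 2 * M a b * t := by
  rw [show Rval Ω KΩ F M a b = -dataPairing Ω KΩ F M / (2 * M a b) by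
    rw [Rval, dataPairing]; ring, le_div_iff_of_neg (by linarith)]
  constructor <;> intro h <;> linarith

lemma rval_le_iff {a b : F} (hm : 0 < M a b) {t : ℝ} :
    Rval Ω KΩ F M a b ≤ t ↔ 0 ≤ dataPairing Ω KΩ F M + 2 * M a b * t := by
  rw [show Rval Ω KΩ F M a b = -dataPairing Ω KΩ F M / (2 * M a b) by
    rw [Rval, dataPairing]; ring, div_le_iff₀ (by linarith)]
  constructor <;> intro h <;> linarith

end Admissible

def rvalSet {X : Type*} (Ω : Set (X × X)) (KΩ : X → X → ℝ) (x y : X) (p : ℝ → Prop) : Set ℝ :=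
  {r | ∃ (F : Finset X) (hx : x ∈ F) (hy : y ∈ F) (M : Matrix F F ℝ),
    Admissible Ω x y F M ∧ p (M ⟨x, hx⟩ ⟨y, hy⟩) ∧ r = Rval Ω KΩ F M ⟨x, hx⟩ ⟨y, hy⟩}

section Values

variable {X : Type*} {Ω : Set (X × X)} {KΩ : X → X → ℝ} {x y : X}

lemma rvalSet_nonempty (hΩ : IsCompletionDomain Ω) (hxy : (x, y) ∉ Ω) {p : ℝ → Prop} {c : ℝ}
    (hc : p c) : (rvalSet Ω KΩ x y p).Nonempty := by
  classical
  have hne : x ≠ y := fun h ↦ hxy (h ▸ hΩ.2 x)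
  have hx : x ∈ ({x, y} : Finset X) := by simp
  have hy : y ∈ ({x, y} : Finset X) := by simp
  set g : ({x, y} : Finset X) → ℝ := fun u ↦ if (u : X) = x then 1 else c
  refine ⟨_, {x, y}, hx, hy, vecMulVec g g, ⟨by simpa using posSemidef_vecMulVec_self_star g,
    fun u v huv ↦ absurd ?_ huv⟩, by simpa [g, vecMulVec_apply, hne.symm] using hc, rfl⟩
  have hu := Finset.mem_insert.1 u.2
  have hv := Finset.mem_insert.1 v.2
  simp only [Finset.mem_singleton] at hu hv
  rcases hu with hu | hu <;> rcases hv with hv | hv <;> simp [hu, hv, hΩ.2]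

open scoped Classical in
lemma sum_mul_ite_nonneg (hΩ : IsCompletionDomain Ω) (hne : ∃ K, IsCompletion Ω KΩ K)
    (hxy : (x, y) ∉ Ω) {t : ℝ} (hneg : t ∈ lowerBounds (rvalSet Ω KΩ x y (· < 0)))
    (hpos : t ∈ upperBounds (rvalSet Ω KΩ x y (0 < ·))) {F : Finset X} {M : Matrix F F ℝ}
    (hM : M.PosSemidef) (hsupp : ∀ u v : F, ((u : X), (v : X)) ∉ Ω ∪ {(x, y), (y, x)} → M u v = 0) :
    0 ≤ ∑ u, ∑ v, M u v * if ((u : X), (v : X)) ∈ Ω then KΩ u v else t := by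
  obtain ⟨K₀, hK₀⟩ := hne
  have hyx : (y, x) ∉ Ω := mt (hΩ.1 y x).1 hxy
  by_cases hxyF : x ∈ F ∧ y ∈ F
  · obtain ⟨hx, hy⟩ := hxyF
    have hadm : Admissible Ω x y F M := ⟨hM, hsupp⟩
    rw [hadm.sum_mul_eq hΩ hxy hx hy (fun u v h ↦ if_pos h) (by simp [hxy, hyx]), if_neg hxy]
    rcases lt_trichotomy (M ⟨x, hx⟩ ⟨y, hy⟩) 0 with hm | hm | hm
    · exact (le_rval_iff hm).1 (hneg ⟨F, hx, hy, M, hadm, hm, rfl⟩)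
    · have := hadm.sum_mul_eq hΩ hxy hx hy hK₀.2 (hK₀.1.1 y x) ▸ hK₀.1.sum_mul_nonneg hM
      simpa [hm] using this
    · exact (rval_le_iff hm).1 (hpos ⟨F, hx, hy, M, hadm, hm, rfl⟩)
  -- `M` lives on `Ω`, where the data agrees with the completion `K₀`.
  refine (hK₀.1.sum_mul_nonneg hM).trans_eq <|
    Finset.sum_congr rfl fun u _ ↦ Finset.sum_congr rfl fun v _ ↦ ?_
  by_cases h : ((u : X), (v : X)) ∈ Ω
  · simp [h, hK₀.2 _ _ h]
  · rw [hsupp u v ?_, zero_mul, zero_mul]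
    rintro (h' | h' | h')
    · exact h h'
    · exact hxyF ⟨(Prod.mk.inj h').1 ▸ u.2, (Prod.mk.inj h').2 ▸ v.2⟩
    · exact hxyF ⟨(Prod.mk.inj h').2 ▸ v.2, (Prod.mk.inj h').1 ▸ u.2⟩

theorem exists_completion_apply_eq (hΩ : IsCompletionDomain Ω)
    (hsymm : ∀ u v, (u, v) ∈ Ω → KΩ u v = KΩ v u) (hne : ∃ K, IsCompletion Ω KΩ K)
    (hxy : (x, y) ∉ Ω) {t : ℝ} (hneg : t ∈ lowerBounds (rvalSet Ω KΩ x y (· < 0)))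
    (hpos : t ∈ upperBounds (rvalSet Ω KΩ x y (0 < ·))) :
    ∃ K, IsCompletion Ω KΩ K ∧ K x y = t := by
  classical
  have hyx : (y, x) ∉ Ω := mt (hΩ.1 y x).1 hxy
  -- Complete the data extended by the value `t` at `(x, y)` and `(y, x)`.
  set K' : X → X → ℝ := fun u v ↦ if (u, v) ∈ Ω then KΩ u v else t
  have hΩ' : IsCompletionDomain (Ω ∪ {(x, y), (y, x)}) := by
    refine ⟨fun u v ↦ ?_, fun u ↦ Or.inl (hΩ.2 u)⟩
    simp only [Set.mem_union, Set.mem_insert_iff, Set.mem_singleton_iff, Prod.mk.injEq, hΩ.1 u v]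
    tauto
  have hK' : ∀ u v, (u, v) ∈ Ω ∪ {(x, y), (y, x)} → K' u v = K' v u := by
    rintro u v (h | h | h)
    · simp [K', h, (hΩ.1 u v).1 h, hsymm u v h]
    all_goals obtain ⟨rfl, rfl⟩ := Prod.mk.inj h; simp [K', hxy, hyx]
  obtain ⟨K, hK, hKK'⟩ := exists_completion_of_pairing_nonneg hΩ' hK' fun F M hM hsupp ↦
    sum_mul_ite_nonneg hΩ hne hxy hneg hpos hM hsupp
  exact ⟨K, ⟨hK, fun u v h ↦ (hKK' u v (Or.inl h)).trans (if_pos h)⟩,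
    (hKK' x y (Or.inr (Or.inl rfl))).trans (if_neg hxy)⟩

theorem image_completion_apply_eq (hΩ : IsCompletionDomain Ω)
    (hsymm : ∀ u v, (u, v) ∈ Ω → KΩ u v = KΩ v u) (hne : ∃ K, IsCompletion Ω KΩ K)
    (hxy : (x, y) ∉ Ω) :
    (fun K : X → X → ℝ ↦ K x y) '' {K | IsCompletion Ω KΩ K} =
      lowerBounds (rvalSet Ω KΩ x y (· < 0)) ∩ upperBounds (rvalSet Ω KΩ x y (0 < ·)) := by
  ext t
  refine ⟨?_, fun ⟨hneg, hpos⟩ ↦ exists_completion_apply_eq hΩ hsymm hne hxy hneg hpos⟩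
  rintro ⟨K, hK, rfl⟩
  have hpair : ∀ (F : Finset X) (hx : x ∈ F) (hy : y ∈ F) (M : Matrix F F ℝ),
      Admissible Ω x y F M → 0 ≤ dataPairing Ω KΩ F M + 2 * M ⟨x, hx⟩ ⟨y, hy⟩ * K x y :=
    fun F hx hy M hM ↦ hM.sum_mul_eq hΩ hxy hx hy hK.2 (hK.1.1 y x) ▸ hK.1.sum_mul_nonneg hM.1
  exact ⟨fun r ⟨F, hx, hy, M, hM, hm, hr⟩ ↦ hr ▸ (le_rval_iff hm).2 (hpair F hx hy M hM),
    fun r ⟨F, hx, hy, M, hM, hm, hr⟩ ↦ hr ▸ (rval_le_iff hm).2 (hpair F hx hy M hM)⟩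

end Values

lemma isGreatest_csInf_and_isLeast_csSup {α : Type*} [ConditionallyCompleteLattice α]
    {S A B : Set α} (hS : S = lowerBounds A ∩ upperBounds B) (hSne : S.Nonempty)
    (hA : A.Nonempty) (hB : B.Nonempty) : IsGreatest S (sInf A) ∧ IsLeast S (sSup B) := by
  subst hS
  obtain ⟨s, hsA, hsB⟩ := hSne
  have hBA : ∀ b ∈ B, ∀ a ∈ A, b ≤ a := fun b hb a ha ↦ (hsB hb).trans (hsA ha)
  exact ⟨⟨⟨fun a ha ↦ csInf_le ⟨s, hsA⟩ ha, fun b hb ↦ le_csInf hA (hBA b hb)⟩,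
      fun t ht ↦ le_csInf hA ht.1⟩,
    ⟨⟨fun a ha ↦ csSup_le hB fun b hb ↦ hBA b hb a ha, fun b hb ↦ le_csSup ⟨s, hsB⟩ hb⟩,
      fun t ht ↦ csSup_le hB ht.2⟩⟩

/-- The maximum (resp. minimum) value of `K(x,y)` over completions `K` equals the infimum
(resp. supremum) of `ℛ_{xy}(M,F)` over admissible pairs with `m_{xy} < 0` (resp. `> 0`). -/
theorem sup_inf_completion_value {X : Type*}
    (Ω : Set (X × X)) (hΩ : IsCompletionDomain Ω) (KΩ : X → X → ℝ)
    (hsymm : ∀ u v, (u, v) ∈ Ω → KΩ u v = KΩ v u)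
    (hne : ∃ K : X → X → ℝ, IsCompletion Ω KΩ K)
    (x y : X) (hxy : (x, y) ∉ Ω) :
    sSup ((fun K : X → X → ℝ => K x y) '' {K | IsCompletion Ω KΩ K}) =
      sInf {r : ℝ | ∃ (F : Finset X) (hx : x ∈ F) (hy : y ∈ F) (M : Matrix ↥F ↥F ℝ),
        Admissible Ω x y F M ∧ M ⟨x, hx⟩ ⟨y, hy⟩ < 0 ∧
          r = Rval Ω KΩ F M ⟨x, hx⟩ ⟨y, hy⟩} ∧
    sInf ((fun K : X → X → ℝ => K x y) '' {K | IsCompletion Ω KΩ K}) =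
      sSup {r : ℝ | ∃ (F : Finset X) (hx : x ∈ F) (hy : y ∈ F) (M : Matrix ↥F ↥F ℝ),
        Admissible Ω x y F M ∧ 0 < M ⟨x, hx⟩ ⟨y, hy⟩ ∧
          r = Rval Ω KΩ F M ⟨x, hx⟩ ⟨y, hy⟩} := by
  obtain ⟨K, hK⟩ := hne
  obtain ⟨hmax, hmin⟩ := isGreatest_csInf_and_isLeast_csSup
    (image_completion_apply_eq hΩ hsymm ⟨K, hK⟩ hxy) ⟨K x y, K, hK, rfl⟩
    (rvalSet_nonempty hΩ hxy (neg_one_lt_zero : (-1 : ℝ) < 0))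
    (rvalSet_nonempty hΩ hxy (one_pos : (0 : ℝ) < 1))
  exact ⟨hmax.csSup_eq, hmin.csInf_eq⟩
end
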